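/- Let γ ∈ (1/2,2], j ≥ 1 an integer, and y* ∈ 𝕋. There exists a constant C > 0, depending only on γ and j, such that for every σ ∈ (0,1) and every f_i ∈ H^γ(𝕋;ℂ) supported in a ball B(y*;2r) with r ≤ π/10: σ^{j/(j+γ)} ‖f_i‖_{L²(𝕋)}² ≤ C σ ‖|∂_y|^γ f_i‖_{L²(𝕋)}² + C ‖ |y−y*|^{j} f_i ‖_{L²(𝕋)}². -/

import Mathlib

open MeasureTheory Real Complex

noncomputable section

/-- `ℓ`-th Fourier coefficient of a (2π-periodic) function on the torus `𝕋 = [-π, π]`. -/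
def fc (f : ℝ → ℂ) (ℓ : ℤ) : ℂ :=
  ((2 * π : ℝ) : ℂ)⁻¹ * ∫ y in Set.Ioc (-(π : ℝ)) π, f y * Complex.exp (-Complex.I * (ℓ : ℂ) * (y : ℂ))

/-- membership in `L²(𝕋)`. -/
def MemL2 (f : ℝ → ℂ) : Prop :=
  MemLp f 2 (volume.restrict (Set.Ioc (-(π : ℝ)) π))

/-- square of the `L²(𝕋)` norm. -/
def L2sq (f : ℝ → ℂ) : ℝ := ∫ y in Set.Ioc (-(π : ℝ)) π, ‖f y‖ ^ 2

/-- the `L²(𝕋)` norm. -/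
def L2norm (f : ℝ → ℂ) : ℝ := Real.sqrt (L2sq f)

/-- square of the `L²(𝕋²)` norm. -/
def L2sq2 (f : ℝ → ℝ → ℂ) : ℝ :=
  ∫ x in Set.Ioc (-(π : ℝ)) π, ∫ y in Set.Ioc (-(π : ℝ)) π, ‖f x y‖ ^ 2

/-- the `L²(𝕋²)` norm. -/
def L2norm2 (f : ℝ → ℝ → ℂ) : ℝ := Real.sqrt (L2sq2 f)

/-- `v = |∂_y|^γ f`: the Fourier multiplier `|ℓ|^γ`. -/
def IsFracDeriv (γ : ℝ) (f v : ℝ → ℂ) : Prop :=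
  ∀ ℓ : ℤ, fc v ℓ = ((|(ℓ : ℝ)| ^ γ : ℝ) : ℂ) * fc f ℓ

/-- `v = (-Δ_y)^γ f`: the Fourier multiplier `|ℓ|^{2γ}`. -/
def IsFracLap (γ : ℝ) (f v : ℝ → ℂ) : Prop :=
  ∀ ℓ : ℤ, fc v ℓ = ((|(ℓ : ℝ)| ^ (2 * γ) : ℝ) : ℂ) * fc f ℓ

/-- membership in the Sobolev space `H^s(𝕋)`. -/
def MemHs (s : ℝ) (f : ℝ → ℂ) : Prop :=
  MemL2 f ∧ Summable fun ℓ : ℤ => (1 + |(ℓ : ℝ)| ^ (2 * s)) * ‖fc f ℓ‖ ^ 2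

/-- almost everywhere on the torus `[-π,π]`. -/
def TorusAE (P : ℝ → Prop) : Prop :=
  ∀ᵐ y ∂(volume.restrict (Set.Ioc (-(π : ℝ)) π)), P y

/-- the logarithmic-loss exponent `β(γ) = 8γ(1-γ) 𝟙_{γ∈(1/2,1)}`. -/
def betaExp (γ : ℝ) : ℝ := if γ < 1 then 8 * γ * (1 - γ) else 0

/-- the exponent `α(γ) = (1-γ) 𝟙_{γ∈(1/2,1)}`. -/
def alphaExp (γ : ℝ) : ℝ := if γ < 1 then 1 - γ else 0

/-- the enhanced-dissipation exponent `d = (j+1)/(j+1+2γ)`. -/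
def dExp (j : ℕ) (γ : ℝ) : ℝ := ((j : ℝ) + 1) / ((j : ℝ) + 1 + 2 * γ)

/-- A smooth shear profile on the torus `𝕋 = [-π,π]` with finitely many critical points
`y_1^*, …, y_N^*`, of finite vanishing orders `j_1, …, j_N`, satisfying the non-degeneracy
assumption `C₁⁻¹ |y - y_i^*|^{j_i} ≤ |u'(y)| ≤ C₁ |y - y_i^*|^{j_i}` near each critical point. -/
structure ShearProfile where
  u : ℝ → ℝ
  smooth : ContDiff ℝ (⊤ : ℕ∞) u
  periodic : Function.Periodic u (2 * π)
  N : ℕ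
  Npos : 0 < N
  ys : Fin N → ℝ
  ys_mem : ∀ i, ys i ∈ Set.Ioc (-(π : ℝ)) π
  ys_crit : ∀ i, deriv u (ys i) = 0
  crit_sub : ∀ y ∈ Set.Ioc (-(π : ℝ)) π, deriv u y = 0 → ∃ i, y = ys i
  js : Fin N → ℕ
  js_pos : ∀ i, 1 ≤ js i
  js_vanish : ∀ i, ∀ ℓ : ℕ, 1 ≤ ℓ → ℓ ≤ js i → iteratedDeriv ℓ u (ys i) = 0
  js_nonvanish : ∀ i, iteratedDeriv (js i + 1) u (ys i) ≠ 0
  R : Fin N → ℝ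
  R_mem : ∀ i, R i ∈ Set.Ioo (0 : ℝ) (π / 10)
  C1 : ℝ
  C1_gt : 1 < C1
  deriv_lower : ∀ i, ∀ y ∈ Metric.ball (ys i) (R i),
    C1⁻¹ * |y - ys i| ^ (js i) ≤ |deriv u y|
  deriv_upper : ∀ i, ∀ y ∈ Metric.ball (ys i) (R i),
    |deriv u y| ≤ C1 * |y - ys i| ^ (js i)

/-- the maximal vanishing order `j_m` of a shear profile. -/
def ShearProfile.jm (U : ShearProfile) : ℕ := Finset.univ.sup U.js

end


noncomputable section WSGAux

open MeasureTheory Real Set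

instance fact_two_pi_pos : Fact ((0:ℝ) < 2 * π) := ⟨by positivity⟩

namespace WSG

lemma finite_restrict (a b : ℝ) : IsFiniteMeasure (volume.restrict (Set.Ioc a b)) :=
  ⟨by rw [Measure.restrict_apply_univ]; exact measure_Ioc_lt_top⟩

/-- the canonical section of the projection `ℝ → AddCircle (2π)`, with values in `Ioc a (a+2π)`. -/
def iota (a : ℝ) (z : AddCircle (2 * π)) : ℝ := (AddCircle.equivIoc (2 * π) a z : ℝ)

lemma iota_mem (a : ℝ) (z : AddCircle (2 * π)) : iota a z ∈ Set.Ioc a (a + 2 * π) :=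
  (AddCircle.equivIoc (2 * π) a z).2

lemma coe_iota (a : ℝ) (z : AddCircle (2 * π)) : ((iota a z : ℝ) : AddCircle (2 * π)) = z :=
  (AddCircle.equivIoc (2 * π) a).symm_apply_apply z

lemma iota_coe {a x : ℝ} (hx : x ∈ Set.Ioc a (a + 2 * π)) :
    iota a ((x : ℝ) : AddCircle (2 * π)) = x :=
  AddCircle.liftIoc_coe_apply (f := (id : ℝ → ℝ)) hx

lemma measurable_iota (a : ℝ) : Measurable (iota a) :=
  measurable_subtype_coe.comp (AddCircle.measurableEquivIoc (2 * π) a).measurable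

lemma measurePreserving_iota (a : ℝ) :
    MeasurePreserving (iota a) volume (volume.restrict (Set.Ioc a (a + 2 * π))) := by
  refine ⟨measurable_iota a, ?_⟩
  have hq := AddCircle.measurePreserving_mk (2 * π) a
  rw [← hq.map_eq, Measure.map_map (measurable_iota a) AddCircle.measurable_mk']
  have he : (iota a ∘ (fun x : ℝ => (x : AddCircle (2 * π))))
      =ᵐ[volume.restrict (Set.Ioc a (a + 2 * π))] id := by
    filter_upwards [ae_restrict_mem measurableSet_Ioc] with x hx
    exact iota_coe hx
  rw [Measure.map_congr he, Measure.map_id]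

lemma lift_eq_comp_iota {E : Type*} {g : ℝ → E} (hg : Function.Periodic g (2 * π)) (a : ℝ) :
    ∀ z, hg.lift z = g (iota a z) := by
  intro z
  conv_lhs => rw [← coe_iota a z]
  exact hg.lift_coe _

/-- the integral of a `2π`-periodic function over any interval of length `2π` is the same. -/
lemma periodic_setIntegral_eq {E : Type*} [NormedAddCommGroup E] [NormedSpace ℝ E]
    {g : ℝ → E} (hg : Function.Periodic g (2 * π)) (a b : ℝ) :
    ∫ y in Set.Ioc a (a + 2 * π), g y = ∫ y in Set.Ioc b (b + 2 * π), g y := by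
  have h1 := AddCircle.integral_preimage (2 * π) a hg.lift
  have h2 := AddCircle.integral_preimage (2 * π) b hg.lift
  simp only [hg.lift_coe] at h1 h2
  rw [h1, h2]

lemma memL2_of_periodic {g : ℝ → ℂ} (hper : Function.Periodic g (2 * π)) (hg : MemL2 g)
    (a : ℝ) : MemLp g 2 (volume.restrict (Set.Ioc a (a + 2 * π))) := by
  have hπ : -π + 2 * π = π := by ring
  have hι : MeasurePreserving (iota (-π)) volume (volume.restrict (Set.Ioc (-(π:ℝ)) π)) := by
    have := measurePreserving_iota (-π); rwa [hπ] at this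
  have hg' : MemLp g 2 (volume.restrict (Set.Ioc (-(π:ℝ)) π)) := hg
  have hlift : MemLp hper.lift 2 (volume : Measure (AddCircle (2 * π))) := by
    have h := hg'.comp_measurePreserving hι
    have he : g ∘ iota (-π) = hper.lift := funext fun z => (lift_eq_comp_iota hper (-π) z).symm
    rwa [he] at h
  have h := hlift.comp_measurePreserving (AddCircle.measurePreserving_mk (2 * π) a)
  have he : hper.lift ∘ (fun x : ℝ => (x : AddCircle (2 * π))) = g :=
    funext fun x => hper.lift_coe x
  rwa [he] at h

lemma fc_eq_fourierCoeff (g : ℝ → ℂ) (ℓ : ℤ) :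
    fourierCoeff (AddCircle.liftIoc (2 * π) (-π) g) ℓ = fc g ℓ := by
  have hπ : -π + 2 * π = π := by ring
  have hle : (-π : ℝ) ≤ -π + 2 * π := by rw [hπ]; linarith [Real.pi_pos]
  rw [fourierCoeff_eq_intervalIntegral _ ℓ (-π), intervalIntegral.integral_of_le hle]
  have hcongr : ∫ x in Set.Ioc (-π) (-π + 2 * π),
        (fourier (-ℓ) (x : AddCircle (2 * π))) • (AddCircle.liftIoc (2 * π) (-π) g) (x : AddCircle (2*π))
      = ∫ x in Set.Ioc (-π) (-π + 2 * π), g x * Complex.exp (-Complex.I * ℓ * x) := by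
    refine setIntegral_congr_fun measurableSet_Ioc fun x hx => ?_
    rw [AddCircle.liftIoc_coe_apply hx, fourier_coe_apply, smul_eq_mul, mul_comm]
    congr 1
    congr 1
    have hπC : (π : ℂ) ≠ 0 := Complex.ofReal_ne_zero.mpr Real.pi_ne_zero
    push_cast
    field_simp
  rw [hcongr, hπ]
  rw [fc, Complex.real_smul]
  push_cast [one_div]
  ring

lemma parseval {g : ℝ → ℂ} (hg : MemL2 g) :
    Summable (fun ℓ : ℤ => ‖fc g ℓ‖ ^ 2) ∧ L2sq g = (2 * π) * ∑' ℓ : ℤ, ‖fc g ℓ‖ ^ 2 := by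
  have hπ : -π + 2 * π = π := by ring
  set F := AddCircle.liftIoc (2 * π) (-π) g with hF
  have hFι : F = g ∘ iota (-π) := rfl
  have hι : MeasurePreserving (iota (-π)) volume (volume.restrict (Set.Ioc (-(π:ℝ)) π)) := by
    have := measurePreserving_iota (-π); rwa [hπ] at this
  have hg' : MemLp g 2 (volume.restrict (Set.Ioc (-(π:ℝ)) π)) := hg
  have hFvol : MemLp F 2 (volume : Measure (AddCircle (2 * π))) := by
    rw [hFι]; exact hg'.comp_measurePreserving hι
  have hofR : (ENNReal.ofReal (2 * π)) ≠ 0 := by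
    simp only [ne_eq, ENNReal.ofReal_eq_zero, not_le]
    positivity
  have hhaar_vol : (AddCircle.haarAddCircle : Measure (AddCircle (2 * π)))
      = (ENNReal.ofReal (2 * π))⁻¹ • volume := by
    rw [AddCircle.volume_eq_smul_haarAddCircle, smul_smul,
      ENNReal.inv_mul_cancel hofR ENNReal.ofReal_ne_top, one_smul]
  have hFh : MemLp F 2 AddCircle.haarAddCircle := by
    rw [hhaar_vol]
    exact hFvol.smul_measure (by simp [ENNReal.inv_ne_top, hofR, Real.pi_pos])
  set FL := hFh.toLp F with hFL
  have hcoeff : ∀ ℓ : ℤ, fourierCoeff (⇑FL) ℓ = fc g ℓ := by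
    intro ℓ
    rw [← fc_eq_fourierCoeff g ℓ]
    exact integral_congr_ae (by filter_upwards [hFh.coeFn_toLp] with z hz; rw [hz])
  have hI2 : ∫ z, ‖F z‖ ^ 2 ∂(volume : Measure (AddCircle (2 * π))) = L2sq g := by
    have h1 := AddCircle.integral_preimage (2 * π) (-π) (fun z => ‖F z‖ ^ 2)
    have hset : Set.Ioc (-(π:ℝ)) π = Set.Ioc (-π) (-π + 2 * π) := by rw [hπ]
    rw [← h1, L2sq, hset]
    refine setIntegral_congr_fun measurableSet_Ioc fun x hx => ?_
    rw [hF, AddCircle.liftIoc_coe_apply hx]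
  have hvol_haar : ∫ z, ‖F z‖ ^ 2 ∂(volume : Measure (AddCircle (2 * π)))
      = (2 * π) * ∫ z, ‖F z‖ ^ 2 ∂AddCircle.haarAddCircle := by
    rw [AddCircle.volume_eq_smul_haarAddCircle, integral_smul_measure,
      ENNReal.toReal_ofReal (by positivity), smul_eq_mul]
  have hpars := tsum_sq_fourierCoeff FL
  have hFL2 : ∫ t, ‖FL t‖ ^ 2 ∂AddCircle.haarAddCircle
      = ∫ z, ‖F z‖ ^ 2 ∂AddCircle.haarAddCircle :=
    integral_congr_ae (by filter_upwards [hFh.coeFn_toLp] with z hz; rw [hz])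
  have hsum : Summable (fun ℓ : ℤ => ‖fc g ℓ‖ ^ 2) := by
    have hmem : Memℓp (⇑(fourierBasis.repr FL)) 2 := lp.memℓp _
    have hs := (memℓp_gen_iff (p := 2) (by norm_num)).mp hmem
    refine hs.congr fun i => ?_
    rw [fourierBasis_repr, hcoeff i]
    rw [show ENNReal.toReal 2 = ((2:ℕ):ℝ) by norm_num, Real.rpow_natCast]
  refine ⟨hsum, ?_⟩
  calc L2sq g = (2 * π) * ∫ z, ‖F z‖ ^ 2 ∂AddCircle.haarAddCircle := by rw [← hvol_haar, hI2]
  _ = (2 * π) * ∑' ℓ : ℤ, ‖fc g ℓ‖ ^ 2 := by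
      rw [← hFL2, ← hpars]
      congr 1
      exact tsum_congr fun ℓ => by rw [hcoeff ℓ]


lemma norm_exp_I_mul (c : ℤ) (y : ℝ) :
    ‖Complex.exp (Complex.I * (c:ℂ) * (y:ℝ))‖ = 1 := by
  rw [Complex.norm_exp]
  have : (Complex.I * (c:ℂ) * (y:ℝ)).re = 0 := by simp
  rw [this, Real.exp_zero]

lemma norm_neg_exp_I_mul (c : ℤ) (y : ℝ) :
    ‖Complex.exp (-Complex.I * (c:ℂ) * (y:ℝ))‖ = 1 := by
  rw [Complex.norm_exp]
  have : (-Complex.I * (c:ℂ) * (y:ℝ)).re = 0 := by simp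
  rw [this, Real.exp_zero]

lemma integrable_conj_exp {f : ℝ → ℂ}
    (hf : Integrable f (volume.restrict (Set.Ioc (-(π:ℝ)) π))) (ℓ : ℤ) :
    Integrable (fun y => f y * Complex.exp (-Complex.I * ℓ * y))
      (volume.restrict (Set.Ioc (-(π:ℝ)) π)) := by
  have hcont : Continuous (fun y : ℝ => Complex.exp (-Complex.I * ℓ * y)) :=
    Complex.continuous_exp.comp ((continuous_const.mul Complex.continuous_ofReal))
  have h := Integrable.bdd_mul (c := 1) hf hcont.aestronglyMeasurable
    (Filter.Eventually.of_forall fun y => le_of_eq (norm_neg_exp_I_mul ℓ y))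
  have he : (fun y : ℝ => Complex.exp (-Complex.I * ℓ * y) * f y)
      = fun y : ℝ => f y * Complex.exp (-Complex.I * ℓ * y) := funext fun y => mul_comm _ _
  rwa [he] at h

lemma fc_sub {f g : ℝ → ℂ}
    (hf : Integrable f (volume.restrict (Set.Ioc (-(π:ℝ)) π)))
    (hg : Integrable g (volume.restrict (Set.Ioc (-(π:ℝ)) π))) (ℓ : ℤ) :
    fc (fun y => f y - g y) ℓ = fc f ℓ - fc g ℓ := by
  unfold fc
  rw [← mul_sub, ← integral_sub (integrable_conj_exp hf ℓ) (integrable_conj_exp hg ℓ)]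
  congr 1
  refine integral_congr_ae (Filter.Eventually.of_forall fun y => ?_)
  ring

lemma fc_exp (m ℓ : ℤ) :
    fc (fun y : ℝ => Complex.exp (Complex.I * m * y)) ℓ = if m = ℓ then 1 else 0 := by
  unfold fc
  have hexp : ∀ y : ℝ, Complex.exp (Complex.I * m * y) * Complex.exp (-Complex.I * ℓ * y)
      = Complex.exp ((Complex.I * (m - ℓ)) * y) := by
    intro y; rw [← Complex.exp_add]; congr 1; push_cast; ring
  simp_rw [hexp]
  rcases eq_or_ne m ℓ with h | h
  · subst h
    rw [if_pos rfl]
    have hz : ∀ y : ℝ, Complex.exp ((Complex.I * ((m:ℂ) - m)) * y) = 1 := by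
      intro y; rw [sub_self, mul_zero, zero_mul, Complex.exp_zero]
    simp_rw [hz]
    rw [setIntegral_const, Real.volume_real_Ioc_of_le (by linarith [Real.pi_pos]),
      Complex.real_smul, mul_one,
      show (π : ℝ) - -π = 2 * π by ring,
      inv_mul_cancel₀ (Complex.ofReal_ne_zero.mpr (by positivity))]
  · rw [if_neg h]
    have hc : (Complex.I * ((m : ℂ) - ℓ)) ≠ 0 := by
      apply mul_ne_zero Complex.I_ne_zero
      rw [sub_ne_zero]
      exact_mod_cast h
    have hzero : ∫ y in Set.Ioc (-(π:ℝ)) π, Complex.exp ((Complex.I * ((m:ℂ) - ℓ)) * y) = 0 := by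
      rw [← intervalIntegral.integral_of_le (by linarith [Real.pi_pos])]
      rw [integral_exp_mul_complex hc]
      have hper : Complex.exp ((Complex.I * ((m:ℂ) - ℓ)) * π)
          = Complex.exp ((Complex.I * ((m:ℂ) - ℓ)) * (-π:ℝ)) := by
        rw [show ((Complex.I * ((m:ℂ) - ℓ)) * (π:ℝ))
            = (Complex.I * ((m:ℂ) - ℓ)) * ((-π:ℝ):ℂ) + ((m - ℓ : ℤ) : ℂ) * (2 * π * Complex.I) by
          push_cast; ring]
        rw [Complex.exp_add, Complex.exp_int_mul_two_pi_mul_I, mul_one]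
      rw [hper, sub_self, zero_div]
    rw [hzero, mul_zero]

lemma fc_sum (A : Finset ℤ) (c : ℤ → ℂ) (ℓ : ℤ) :
    fc (fun y => ∑ m ∈ A, c m * Complex.exp (Complex.I * m * y)) ℓ
      = ∑ m ∈ A, c m * fc (fun y => Complex.exp (Complex.I * m * y)) ℓ := by
  unfold fc
  have hrw : ∀ y : ℝ, (∑ m ∈ A, c m * Complex.exp (Complex.I * m * y))
        * Complex.exp (-Complex.I * ℓ * y)
      = ∑ m ∈ A, c m * (Complex.exp (Complex.I * m * y) * Complex.exp (-Complex.I * ℓ * y)) := by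
    intro y
    rw [Finset.sum_mul]
    exact Finset.sum_congr rfl fun m _ => by ring
  simp_rw [hrw]
  rw [integral_finset_sum]
  · rw [Finset.mul_sum]
    refine Finset.sum_congr rfl fun m _ => ?_
    rw [integral_const_mul]
    ring
  · intro m _
    apply Continuous.integrableOn_Ioc
    exact continuous_const.mul
      ((Complex.continuous_exp.comp (continuous_const.mul Complex.continuous_ofReal)).mul
        (Complex.continuous_exp.comp (continuous_const.mul Complex.continuous_ofReal)))


lemma sq_integrable {α : Type*} [MeasurableSpace α] {μ : MeasureTheory.Measure α} {f : α → ℂ}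
    (hf : MemLp f 2 μ) : Integrable (fun y => ‖f y‖ ^ 2) μ := by
  have h := hf.integrable_norm_rpow two_ne_zero ENNReal.ofNat_ne_top
  have h2 : ENNReal.toReal 2 = ((2:ℕ):ℝ) := by norm_num
  simpa [h2, Real.rpow_natCast] using h

end WSG

end WSGAux

set_option maxHeartbeats 2000000 in
/-- Weighted spectral gap estimate on the torus:
`σ^{j/(j+γ)} ‖f_i‖² ≤ C σ ‖|∂_y|^γ f_i‖² + C ‖|y-y*|^j f_i‖²` for `f_i` supported in
`B(y*;2r)`, `r ≤ π/10`, uniformly in `σ ∈ (0,1)`. -/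
theorem weighted_spectral_gap
    (γ : ℝ) (hγ : γ ∈ Set.Ioc (1 / 2 : ℝ) 2)
    (j : ℕ) (hj : 1 ≤ j) :
    ∃ C > (0 : ℝ),
      ∀ ystar : ℝ, ∀ σ ∈ Set.Ioo (0 : ℝ) 1, ∀ r : ℝ, 0 < r → r ≤ π / 10 →
      ∀ fi Dfi : ℝ → ℂ,
        MemHs γ fi → Function.Periodic fi (2 * π) →
        -- fi is supported in the ball B(y*;2r) on the torus
        (∀ y ∈ Set.Ioc (ystar - π) (ystar + π), 2 * r < |y - ystar| → fi y = 0) →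
        MemL2 Dfi → IsFracDeriv γ fi Dfi →
        σ ^ ((j : ℝ) / ((j : ℝ) + γ)) * L2sq fi ≤
          C * σ * L2sq Dfi +
          C * ∫ y in Set.Ioc (ystar - π) (ystar + π),
            |y - ystar| ^ (2 * j) * ‖fi y‖ ^ 2 := by
  classical
  obtain ⟨hγ1, hγ2⟩ := hγ
  have hγ0 : (0:ℝ) < γ := lt_trans (by norm_num) hγ1
  refine ⟨20480, by norm_num, ?_⟩
  rintro ystar σ ⟨hσ0, hσ1⟩ r hr hrr fi Dfi hfiHs hper hsupp hDL2 hDfc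
  obtain ⟨hfiL2, -⟩ := hfiHs
  set N := L2sq fi with hN
  set D := L2sq Dfi with hD
  set W := ∫ y in Set.Ioc (ystar - π) (ystar + π), |y - ystar| ^ (2 * j) * ‖fi y‖ ^ 2 with hW
  set s := σ ^ ((j : ℝ) / ((j : ℝ) + γ)) with hs
  have hjγ : (0:ℝ) < (j:ℝ) + γ := by positivity
  set e : ℝ := 1 / (2 * ((j:ℝ) + γ)) with he
  have he0 : 0 < e := by positivity
  set δ := σ ^ e with hδ
  have hδ0 : 0 < δ := Real.rpow_pos_of_pos hσ0 _
  have hδ1 : δ < 1 := Real.rpow_lt_one hσ0.le hσ1 he0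
  have hs0 : 0 < s := Real.rpow_pos_of_pos hσ0 _
  -- key exponent identities
  have hδ2j : δ ^ (2 * j) = s := by
    rw [hδ, ← Real.rpow_natCast (σ ^ e) (2 * j), ← Real.rpow_mul hσ0.le, hs]
    congr 1
    rw [he]
    push_cast
    field_simp
  have hδ2γ : s * δ ^ ((2:ℝ) * γ) = σ := by
    rw [hδ, ← Real.rpow_mul hσ0.le, hs, ← Real.rpow_add hσ0,
      show (j:ℝ)/((j:ℝ)+γ) + e * (2*γ) = 1 by rw [he]; field_simp,
      Real.rpow_one]
  haveI : IsFiniteMeasure (volume.restrict (Set.Ioc (-(π:ℝ)) π)) := WSG.finite_restrict _ _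
  have hfiL2' : MemLp fi 2 (volume.restrict (Set.Ioc (-(π:ℝ)) π)) := hfiL2
  have hfi_int1 : Integrable fi (volume.restrict (Set.Ioc (-(π:ℝ)) π)) :=
    hfiL2'.integrable one_le_two
  -- frequency cutoff
  set K : ℕ := ⌊π / (12 * δ)⌋₊ with hK
  have hKle : (K:ℝ) ≤ π / (12 * δ) := Nat.floor_le (by positivity)
  have hKgt : π / (12 * δ) < (K:ℝ) + 1 := by rw [hK]; exact Nat.lt_floor_add_one _
  set A : Finset ℤ := Finset.Icc (-(K:ℤ)) K with hA
  set S : ℝ → ℂ := fun y => ∑ m ∈ A, fc fi m * Complex.exp (Complex.I * m * y) with hS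
  set R : ℝ → ℂ := fun y => fi y - S y with hR
  have hScont : Continuous S := by
    rw [hS]
    refine continuous_finset_sum _ fun m _ => ?_
    exact continuous_const.mul
      (Complex.continuous_exp.comp (continuous_const.mul Complex.continuous_ofReal))
  set B : ℝ := ∑ m ∈ A, ‖fc fi m‖ with hB
  have hB0 : 0 ≤ B := Finset.sum_nonneg fun m _ => norm_nonneg _
  have hSbd : ∀ y : ℝ, ‖S y‖ ≤ B := by
    intro y
    rw [hS, hB]
    refine (norm_sum_le _ _).trans (Finset.sum_le_sum fun m _ => ?_)
    rw [norm_mul, WSG.norm_exp_I_mul m y, mul_one]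
  have hSper : Function.Periodic S (2 * π) := by
    intro y
    rw [hS]
    refine Finset.sum_congr rfl fun m _ => ?_
    congr 1
    rw [show Complex.I * (m:ℂ) * ((y + 2*π : ℝ) : ℂ)
        = Complex.I * (m:ℂ) * (y:ℝ) + (m:ℂ) * (2 * (π:ℝ) * Complex.I) by push_cast; ring,
      Complex.exp_add, Complex.exp_int_mul_two_pi_mul_I, mul_one]
  have hSL2 : MemL2 S :=
    MemLp.of_bound hScont.aestronglyMeasurable B (Filter.Eventually.of_forall hSbd)
  have hSL2' : MemLp S 2 (volume.restrict (Set.Ioc (-(π:ℝ)) π)) := hSL2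
  have hSint : Integrable S (volume.restrict (Set.Ioc (-(π:ℝ)) π)) := hSL2'.integrable one_le_two
  have hRL2 : MemL2 R := by
    have h := hfiL2'.sub hSL2'
    exact MemLp.ae_eq (Filter.Eventually.of_forall fun y => by rw [hR]; simp) h
  obtain ⟨hsumf, hNeq⟩ := WSG.parseval hfiL2
  obtain ⟨hsumD, hDeq⟩ := WSG.parseval hDL2
  obtain ⟨hsumR, hReq⟩ := WSG.parseval hRL2
  rw [← hN] at hNeq
  rw [← hD] at hDeq
  have hN0 : 0 ≤ N := by
    rw [hN, L2sq]
    exact setIntegral_nonneg measurableSet_Ioc fun y _ => by positivity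
  have hD0 : 0 ≤ D := by
    rw [hD, L2sq]
    exact setIntegral_nonneg measurableSet_Ioc fun y _ => by positivity
  have hW0 : 0 ≤ W := by
    rw [hW]
    exact setIntegral_nonneg measurableSet_Ioc fun y _ => by positivity
  -- Fourier coefficients of R
  have hfcS : ∀ ℓ : ℤ, fc S ℓ = if ℓ ∈ A then fc fi ℓ else 0 := by
    intro ℓ
    rw [hS, WSG.fc_sum A (fun m => fc fi m) ℓ]
    simp_rw [WSG.fc_exp]
    simp [Finset.sum_ite_eq', mul_ite]
  have hfcR : ∀ ℓ : ℤ, fc R ℓ = if ℓ ∈ A then 0 else fc fi ℓ := by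
    intro ℓ
    rw [hR, WSG.fc_sub hfi_int1 hSint ℓ, hfcS ℓ]
    by_cases hm : ℓ ∈ A <;> simp [hm]
  -- tail estimate : L2sq R * b ^ (2γ) ≤ D
  set b : ℝ := π / (12 * δ) with hb
  have hb0 : 0 < b := by positivity
  have hRD : L2sq R * b ^ ((2:ℝ) * γ) ≤ D := by
    have hpt : ∀ ℓ : ℤ, ‖fc R ℓ‖ ^ 2 * b ^ ((2:ℝ)*γ) ≤ ‖fc Dfi ℓ‖ ^ 2 := by
      intro ℓ
      rw [hfcR ℓ]
      by_cases hm : ℓ ∈ A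
      · rw [if_pos hm]
        have hzz : ‖(0:ℂ)‖ ^ 2 * b ^ ((2:ℝ)*γ) = 0 := by simp
        rw [hzz]
        positivity
      · rw [if_neg hm]
        have hlZ : (K:ℤ) + 1 ≤ |ℓ| := by
          rw [hA, Finset.mem_Icc] at hm
          rcases le_or_gt ℓ 0 with h0 | h0
          · rw [abs_of_nonpos h0]; omega
          · rw [abs_of_pos h0]; omega
        have hl : (K:ℝ) + 1 ≤ |(ℓ:ℝ)| := by
          rw [← Int.cast_abs]
          exact_mod_cast hlZ
        have hbl : b ≤ |(ℓ:ℝ)| := le_trans (le_of_lt hKgt) hl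
        have hpow : b ^ ((2:ℝ)*γ) ≤ |(ℓ:ℝ)| ^ ((2:ℝ)*γ) :=
          Real.rpow_le_rpow hb0.le hbl (by positivity)
        have hDl : ‖fc Dfi ℓ‖ ^ 2 = ‖fc fi ℓ‖ ^ 2 * |(ℓ:ℝ)| ^ ((2:ℝ)*γ) := by
          rw [hDfc ℓ, norm_mul, Complex.norm_real, Real.norm_eq_abs,
            _root_.abs_of_nonneg (Real.rpow_nonneg (abs_nonneg _) _), mul_pow,
            ← Real.rpow_natCast (|(ℓ:ℝ)| ^ γ) 2, ← Real.rpow_mul (abs_nonneg _)]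
          rw [show γ * ((2:ℕ):ℝ) = (2:ℝ) * γ by push_cast; ring]
          ring
        rw [hDl]
        gcongr
    have htsum : (∑' ℓ : ℤ, ‖fc R ℓ‖ ^ 2 * b ^ ((2:ℝ)*γ)) ≤ ∑' ℓ : ℤ, ‖fc Dfi ℓ‖ ^ 2 :=
      Summable.tsum_le_tsum hpt (hsumR.mul_right _) hsumD
    rw [hsumR.tsum_mul_right (b ^ ((2:ℝ)*γ))] at htsum
    rw [hReq, hDeq]
    calc 2 * π * (∑' ℓ : ℤ, ‖fc R ℓ‖ ^ 2) * b ^ ((2:ℝ)*γ)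
        = 2 * π * ((∑' ℓ : ℤ, ‖fc R ℓ‖ ^ 2) * b ^ ((2:ℝ)*γ)) := by ring
      _ ≤ 2 * π * (∑' ℓ : ℤ, ‖fc Dfi ℓ‖ ^ 2) := by
          have h2π : (0:ℝ) ≤ 2 * π := by positivity
          exact mul_le_mul_of_nonneg_left htsum h2π
  -- transfer to the interval around ystar
  have hyπ : ystar - π + 2 * π = ystar + π := by ring
  have hmπ : -π + 2 * π = π := by ring
  have hper2 : Function.Periodic (fun y => ‖fi y‖ ^ 2) (2 * π) := fun y => by
    simp only [hper y]
  have hRper : Function.Periodic R (2 * π) := fun y => by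
    rw [hR]
    simp only [hper y, hSper y]
  have hRper2 : Function.Periodic (fun y => ‖R y‖ ^ 2) (2 * π) := fun y => by
    simp only [hRper y]
  have hNI : ∫ y in Set.Ioc (ystar - π) (ystar + π), ‖fi y‖ ^ 2 = N := by
    have h := WSG.periodic_setIntegral_eq hper2 (ystar - π) (-π)
    rw [hyπ, hmπ] at h
    rw [h]
    rfl
  have hRI : ∫ y in Set.Ioc (ystar - π) (ystar + π), ‖R y‖ ^ 2 = L2sq R := by
    have h := WSG.periodic_setIntegral_eq hRper2 (ystar - π) (-π)
    rw [hyπ, hmπ] at h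
    rw [h]
    rfl
  have hfiI : MemLp fi 2 (volume.restrict (Set.Ioc (ystar - π) (ystar + π))) := by
    have h := WSG.memL2_of_periodic hper hfiL2 (ystar - π)
    rwa [hyπ] at h
  have hRIm : MemLp R 2 (volume.restrict (Set.Ioc (ystar - π) (ystar + π))) := by
    have h := WSG.memL2_of_periodic hRper hRL2 (ystar - π)
    rwa [hyπ] at h
  have hfiI2 : IntegrableOn (fun y => ‖fi y‖ ^ 2) (Set.Ioc (ystar - π) (ystar + π)) volume :=
    WSG.sq_integrable hfiI
  have hRI2 : IntegrableOn (fun y => ‖R y‖ ^ 2) (Set.Ioc (ystar - π) (ystar + π)) volume :=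
    WSG.sq_integrable hRIm
  have hSI2 : IntegrableOn (fun y => ‖S y‖ ^ 2) (Set.Ioc (ystar - π) (ystar + π)) volume :=
    ((hScont.norm.pow 2)).integrableOn_Ioc
  have hWI : IntegrableOn (fun y => |y - ystar| ^ (2*j) * ‖fi y‖ ^ 2)
      (Set.Ioc (ystar - π) (ystar + π)) volume := by
    refine Integrable.mono (hfiI2.const_mul (π ^ (2*j))) ?_ ?_
    · exact (((continuous_id.sub continuous_const).abs.pow (2*j)).aestronglyMeasurable).mul
        hfiI2.aestronglyMeasurable
    · filter_upwards [ae_restrict_mem measurableSet_Ioc] with y hy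
      have h1 : |y - ystar| ≤ π := by
        rw [abs_le]
        constructor <;> [linarith only [hy.1]; linarith only [hy.2]]
      have h2 : |y - ystar| ^ (2*j) ≤ π ^ (2*j) := pow_le_pow_left₀ (abs_nonneg _) h1 _
      simp only [Real.norm_eq_abs]
      rw [_root_.abs_of_nonneg (by positivity : (0:ℝ) ≤ |y - ystar| ^ (2*j) * ‖fi y‖ ^ 2),
        _root_.abs_of_nonneg (by positivity : (0:ℝ) ≤ π ^ (2*j) * ‖fi y‖ ^ 2)]
      have h3 : (0:ℝ) ≤ ‖fi y‖ ^ 2 := by positivity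
      exact mul_le_mul_of_nonneg_right h2 h3
  -- splitting of the interval
  set cb := Metric.closedBall ystar δ with hcb
  have hIsplit : ∫ y in Set.Ioc (ystar - π) (ystar + π), ‖fi y‖ ^ 2
      = (∫ y in Set.Ioc (ystar - π) (ystar + π) ∩ cb, ‖fi y‖ ^ 2)
        + ∫ y in Set.Ioc (ystar - π) (ystar + π) \ cb, ‖fi y‖ ^ 2 :=
    (integral_inter_add_diff measurableSet_closedBall hfiI2).symm
  have hvolcb : (volume (Set.Ioc (ystar - π) (ystar + π) ∩ cb)).toReal ≤ 2 * δ := by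
    have h1 : volume (Set.Ioc (ystar - π) (ystar + π) ∩ cb) ≤ volume cb :=
      measure_mono Set.inter_subset_right
    have h2 := ENNReal.toReal_mono
      (by rw [hcb, Real.volume_closedBall]; exact ENNReal.ofReal_ne_top) h1
    rwa [hcb, Real.volume_closedBall, ENNReal.toReal_ofReal (by positivity)] at h2
  set LR := ∫ y in Set.Ioc (ystar - π) (ystar + π), ‖R y‖ ^ 2 with hLR
  have hLR0 : 0 ≤ LR :=
    setIntegral_nonneg measurableSet_Ioc fun y _ => by positivity
  set far := ∫ y in Set.Ioc (ystar - π) (ystar + π) \ cb, ‖fi y‖ ^ 2 with hfardef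
  have hfar0 : 0 ≤ far :=
    setIntegral_nonneg (measurableSet_Ioc.diff measurableSet_closedBall) fun y _ => by positivity
  -- near-region estimate
  have hnear : ∫ y in Set.Ioc (ystar - π) (ystar + π) ∩ cb, ‖fi y‖ ^ 2
      ≤ 2 * (2 * δ) * B ^ 2 + 2 * LR := by
    have hmeas : MeasurableSet (Set.Ioc (ystar - π) (ystar + π) ∩ cb) :=
      measurableSet_Ioc.inter measurableSet_closedBall
    have step1 : ∫ y in Set.Ioc (ystar - π) (ystar + π) ∩ cb, ‖fi y‖ ^ 2
        ≤ ∫ y in Set.Ioc (ystar - π) (ystar + π) ∩ cb, (2 * ‖S y‖ ^ 2 + 2 * ‖R y‖ ^ 2) := by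
      refine setIntegral_mono_on (hfiI2.mono_set Set.inter_subset_left)
        (((hSI2.mono_set Set.inter_subset_left).const_mul 2).add
          ((hRI2.mono_set Set.inter_subset_left).const_mul 2)) hmeas fun y _ => ?_
      have hy : fi y = S y + R y := by rw [hR]; ring
      have h1 : ‖fi y‖ ≤ ‖S y‖ + ‖R y‖ := by rw [hy]; exact norm_add_le _ _
      nlinarith only [h1, norm_nonneg (fi y), norm_nonneg (S y), norm_nonneg (R y),
        sq_nonneg (‖S y‖ - ‖R y‖)]
    have step2 : ∫ y in Set.Ioc (ystar - π) (ystar + π) ∩ cb, (2 * ‖S y‖ ^ 2 + 2 * ‖R y‖ ^ 2)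
        = 2 * (∫ y in Set.Ioc (ystar - π) (ystar + π) ∩ cb, ‖S y‖ ^ 2)
          + 2 * ∫ y in Set.Ioc (ystar - π) (ystar + π) ∩ cb, ‖R y‖ ^ 2 := by
      rw [integral_add ((hSI2.mono_set Set.inter_subset_left).const_mul 2)
        ((hRI2.mono_set Set.inter_subset_left).const_mul 2),
        integral_const_mul, integral_const_mul]
    have step3 : ∫ y in Set.Ioc (ystar - π) (ystar + π) ∩ cb, ‖S y‖ ^ 2 ≤ 2 * δ * B ^ 2 := by
      have hle : ∫ y in Set.Ioc (ystar - π) (ystar + π) ∩ cb, ‖S y‖ ^ 2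
          ≤ ∫ _y in Set.Ioc (ystar - π) (ystar + π) ∩ cb, B ^ 2 := by
        refine setIntegral_mono_on (hSI2.mono_set Set.inter_subset_left)
          ((integrableOn_const_iff (C := B ^ 2)).mpr (Or.inr ?_)) hmeas fun y _ => ?_
        · exact lt_of_le_of_lt (measure_mono Set.inter_subset_right)
            (by rw [hcb, Real.volume_closedBall]; exact ENNReal.ofReal_lt_top)
        · exact pow_le_pow_left₀ (norm_nonneg _) (hSbd y) 2
      rw [setIntegral_const, smul_eq_mul] at hle
      refine le_trans hle ?_
      have hB2 : (0:ℝ) ≤ B ^ 2 := sq_nonneg _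
      exact mul_le_mul_of_nonneg_right hvolcb hB2
    have step4 : ∫ y in Set.Ioc (ystar - π) (ystar + π) ∩ cb, ‖R y‖ ^ 2 ≤ LR := by
      rw [hLR]
      refine setIntegral_mono_set hRI2 (Filter.Eventually.of_forall fun y => by positivity)
        (HasSubset.Subset.eventuallyLE Set.inter_subset_left)
    calc ∫ y in Set.Ioc (ystar - π) (ystar + π) ∩ cb, ‖fi y‖ ^ 2
        ≤ 2 * (∫ y in Set.Ioc (ystar - π) (ystar + π) ∩ cb, ‖S y‖ ^ 2)
          + 2 * ∫ y in Set.Ioc (ystar - π) (ystar + π) ∩ cb, ‖R y‖ ^ 2 := by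
          rw [← step2]; exact step1
      _ ≤ 2 * (2 * δ * B ^ 2) + 2 * LR := by
          have := step3
          have := step4
          gcongr
      _ = 2 * (2 * δ) * B ^ 2 + 2 * LR := by ring
  -- far-region estimate
  have hfar : δ ^ (2*j) * far ≤ W := by
    have hdm : MeasurableSet (Set.Ioc (ystar - π) (ystar + π) \ cb) :=
      measurableSet_Ioc.diff measurableSet_closedBall
    have step1 : δ ^ (2*j) * far
        = ∫ y in Set.Ioc (ystar - π) (ystar + π) \ cb, δ ^ (2*j) * ‖fi y‖ ^ 2 := by
      rw [hfardef, integral_const_mul]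
    have step2 : ∫ y in Set.Ioc (ystar - π) (ystar + π) \ cb, δ ^ (2*j) * ‖fi y‖ ^ 2
        ≤ ∫ y in Set.Ioc (ystar - π) (ystar + π) \ cb, |y - ystar| ^ (2*j) * ‖fi y‖ ^ 2 := by
      refine setIntegral_mono_on ((hfiI2.mono_set Set.diff_subset).const_mul _)
        (hWI.mono_set Set.diff_subset) hdm fun y hy => ?_
      have hout : δ < |y - ystar| := by
        have := hy.2
        rw [hcb, Metric.mem_closedBall, Real.dist_eq, not_le] at this
        exact this
      have h2 : δ ^ (2*j) ≤ |y - ystar| ^ (2*j) := pow_le_pow_left₀ hδ0.le hout.le _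
      exact mul_le_mul_of_nonneg_right h2 (by positivity)
    have step3 : ∫ y in Set.Ioc (ystar - π) (ystar + π) \ cb, |y - ystar| ^ (2*j) * ‖fi y‖ ^ 2
        ≤ W := by
      rw [hW]
      refine setIntegral_mono_set hWI (Filter.Eventually.of_forall fun y => by positivity)
        (HasSubset.Subset.eventuallyLE Set.diff_subset)
    rw [step1]
    exact le_trans step2 step3
  -- cardinality bound
  have hcard : (A.card : ℝ) = 2 * (K:ℝ) + 1 := by
    have hc : A.card = 2 * K + 1 := by
      rw [hA, Int.card_Icc]
      omega
    rw [hc]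
    push_cast
    ring
  have hB2 : B ^ 2 ≤ (2 * (K:ℝ) + 1) * (N / (2 * π)) := by
    have h1 : B ^ 2 ≤ (A.card : ℝ) * ∑ m ∈ A, ‖fc fi m‖ ^ 2 := by
      rw [hB]
      exact_mod_cast sq_sum_le_card_mul_sum_sq (s := A) (f := fun m => ‖fc fi m‖)
    have h2 : ∑ m ∈ A, ‖fc fi m‖ ^ 2 ≤ ∑' ℓ : ℤ, ‖fc fi ℓ‖ ^ 2 :=
      Summable.sum_le_tsum A (fun i _ => by positivity) hsumf
    have h3 : (∑' ℓ : ℤ, ‖fc fi ℓ‖ ^ 2) = N / (2 * π) := by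
      rw [hNeq]
      field_simp
    calc B ^ 2 ≤ (A.card : ℝ) * ∑ m ∈ A, ‖fc fi m‖ ^ 2 := h1
      _ ≤ (A.card : ℝ) * (N / (2 * π)) := by
          have hc0 : (0:ℝ) ≤ (A.card : ℝ) := Nat.cast_nonneg _
          rw [← h3]
          exact mul_le_mul_of_nonneg_left h2 hc0
      _ = (2 * (K:ℝ) + 1) * (N / (2 * π)) := by rw [hcard]
  -- tail bound in terms of δ
  have hLRD : LR ≤ 256 * δ ^ ((2:ℝ)*γ) * D := by
    set u : ℝ := 12 * δ / π with hu
    have hu0 : 0 < u := by positivity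
    have hbu : b * u = 1 := by
      rw [hb, hu]
      field_simp
    have hu4 : u ≤ 4 * δ := by
      rw [hu, div_le_iff₀ Real.pi_pos]
      nlinarith only [Real.pi_gt_three, hδ0]
    have hupow : u ^ ((2:ℝ)*γ) ≤ 256 * δ ^ ((2:ℝ)*γ) := by
      calc u ^ ((2:ℝ)*γ) ≤ (4*δ) ^ ((2:ℝ)*γ) :=
            Real.rpow_le_rpow hu0.le hu4 (by positivity)
        _ = (4:ℝ) ^ ((2:ℝ)*γ) * δ ^ ((2:ℝ)*γ) :=
            Real.mul_rpow (by norm_num) hδ0.le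
        _ ≤ (4:ℝ) ^ ((4:ℝ)) * δ ^ ((2:ℝ)*γ) := by
            have h4 : (4:ℝ) ^ ((2:ℝ)*γ) ≤ (4:ℝ) ^ ((4:ℝ)) :=
              Real.rpow_le_rpow_of_exponent_le (by norm_num) (by linarith)
            exact mul_le_mul_of_nonneg_right h4 (Real.rpow_nonneg hδ0.le _)
        _ = 256 * δ ^ ((2:ℝ)*γ) := by
            rw [show (4:ℝ) ^ ((4:ℝ)) = (4:ℝ) ^ ((4:ℕ):ℝ) by norm_num, Real.rpow_natCast]
            norm_num
    have hbupow : b ^ ((2:ℝ)*γ) * u ^ ((2:ℝ)*γ) = 1 := by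
      rw [← Real.mul_rpow hb0.le hu0.le, hbu, Real.one_rpow]
    have hLReq : LR = L2sq R := by rw [hLR, ← hRI]
    calc LR = L2sq R * (b ^ ((2:ℝ)*γ) * u ^ ((2:ℝ)*γ)) := by rw [hbupow, mul_one, hLReq]
      _ = (L2sq R * b ^ ((2:ℝ)*γ)) * u ^ ((2:ℝ)*γ) := by ring
      _ ≤ D * u ^ ((2:ℝ)*γ) :=
          mul_le_mul_of_nonneg_right hRD (Real.rpow_nonneg hu0.le _)
      _ ≤ D * (256 * δ ^ ((2:ℝ)*γ)) := mul_le_mul_of_nonneg_left hupow hD0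
      _ = 256 * δ ^ ((2:ℝ)*γ) * D := by ring
  -- the absorption estimate
  have habs : N ≤ (1/3 + 2/π) * N + 2 * (256 * δ ^ ((2:ℝ)*γ) * D) + far := by
    have hall : N ≤ 2 * (2 * δ) * B ^ 2 + 2 * LR + far := by
      rw [← hNI, hIsplit]
      have := hnear
      gcongr
    have hBN : 2 * (2 * δ) * B ^ 2 ≤ (1/3 + 2/π) * N := by
      calc 2 * (2 * δ) * B ^ 2 ≤ 2 * (2 * δ) * ((2 * (K:ℝ) + 1) * (N / (2 * π))) := by
            have h0 : (0:ℝ) ≤ 2 * (2 * δ) := by positivity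
            exact mul_le_mul_of_nonneg_left hB2 h0
        _ ≤ (1/3 + 2/π) * N := by
            have hK6 : 2 * (K:ℝ) + 1 ≤ π / (6 * δ) + 1 := by
              have : 2 * (K:ℝ) ≤ 2 * (π / (12 * δ)) := by linarith only [hKle]
              have h12 : 2 * (π / (12 * δ)) = π / (6 * δ) := by
                field_simp
                ring
              linarith only [this, h12]
            have hexp : 2 * (2 * δ) * ((π / (6 * δ) + 1) * (N / (2 * π)))
                = (1/3 + 2*δ/π) * N := by
              field_simp
              ring
            calc 2 * (2 * δ) * ((2 * (K:ℝ) + 1) * (N / (2 * π)))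
                ≤ 2 * (2 * δ) * ((π / (6 * δ) + 1) * (N / (2 * π))) := by
                  have hN2π : (0:ℝ) ≤ N / (2 * π) := by positivity
                  have h0 : (0:ℝ) ≤ 2 * (2 * δ) := by positivity
                  refine mul_le_mul_of_nonneg_left ?_ h0
                  exact mul_le_mul_of_nonneg_right hK6 hN2π
              _ = (1/3 + 2*δ/π) * N := hexp
              _ ≤ (1/3 + 2/π) * N := by
                  have hδπ : 2*δ/π ≤ 2/π := by
                    gcongr
                    linarith only [hδ1]
                  exact mul_le_mul_of_nonneg_right (by linarith only [hδπ]) hN0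
            
    have hLRD2 : 2 * LR ≤ 2 * (256 * δ ^ ((2:ℝ)*γ) * D) := by linarith only [hLRD]
    linarith only [hall, hBN, hLRD2]
  -- conclude
  have hcoef : (1:ℝ)/40 ≤ 1 - 1/3 - 2/π := by
    have hπ1 : (3.141592 : ℝ) < π := Real.pi_gt_d6
    have h2π : 2/π ≤ 77/120 := by
      rw [div_le_div_iff₀ Real.pi_pos (by norm_num)]
      nlinarith only [hπ1]
    linarith only [h2π]
  have hN40 : N ≤ 40 * (512 * δ ^ ((2:ℝ)*γ) * D) + 40 * far := by
    have h1 : (1 - 1/3 - 2/π) * N ≤ 512 * δ ^ ((2:ℝ)*γ) * D + far := by linarith only [habs]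
    have h2 : (1/40) * N ≤ (1 - 1/3 - 2/π) * N := by
      exact mul_le_mul_of_nonneg_right hcoef hN0
    nlinarith only [h1, h2, hcoef, hN0]
  calc s * N ≤ s * (40 * (512 * δ ^ ((2:ℝ)*γ) * D) + 40 * far) :=
        mul_le_mul_of_nonneg_left hN40 hs0.le
    _ = 20480 * (s * δ ^ ((2:ℝ)*γ)) * D + 40 * (δ ^ (2*j) * far) := by
        rw [hδ2j]
        ring
    _ ≤ 20480 * σ * D + 40 * W := by
        rw [hδ2γ]
        have := hfar
        gcongr
    _ ≤ 20480 * σ * D + 20480 * W := by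
        have h40 : 40 * W ≤ 20480 * W := by nlinarith only [hW0]
        linarith only [h40]
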